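/- For m ≥ 2, the unital ℂ-subalgebra of End_ℂ(H_m) generated by all two-site operators Z^k_{i,j} (for all distinct i, j ∈ {1,…,m} and k ∈ G) together with the right translations R^g_v at interior sites only (v ∈ {2,…,m−1}, g ∈ G) is isomorphic as a ℂ-algebra to the direct sum of |G| copies of M_{|G|^{m−2}}(ℂ). (This is the rough-boundary algebra of the SPT, isomorphic to End_{Hilb(G)}(ℂ[G]^{⊗(m−1)}).) -/

import Mathlib

noncomputable section

open scoped BigOperators

/-- The Hilbert space `H_n = ℂ[G]^{⊗ n}`, realized as functions `G^n → ℂ`;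
the basis ket `|g₁,…,g_n⟩` is the indicator function of `(g₁,…,g_n)`. -/
abbrev Hn (G : Type) (n : ℕ) : Type := (Fin n → G) → ℂ

variable (G : Type) [Group G] [Fintype G] [DecidableEq G] (n : ℕ)

/-- Diagonal operator with diagonal entries `c` (in the ket basis). -/
def diagOp (c : (Fin n → G) → ℂ) : Module.End ℂ (Hn G n) where
  toFun f := fun x => c x * f x
  map_add' f g := by funext x; simp only [Pi.add_apply]; ring
  map_smul' r f := by
    funext x
    simp only [Pi.smul_apply, smul_eq_mul, RingHom.id_apply]
    ring

/-- The operator sending the ket `|y⟩` to the ket `|σ y⟩`, where `τ = σ⁻¹`. -/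
def permOp (τ : (Fin n → G) → (Fin n → G)) : Module.End ℂ (Hn G n) :=
  LinearMap.funLeft ℂ ℂ τ

/-- `R^g_i`: right translation at site `i`, `|…, g_i, …⟩ ↦ |…, g_i g, …⟩`. -/
def Rop (i : Fin n) (g : G) : Module.End ℂ (Hn G n) :=
  permOp G n fun x => Function.update x i (x i * g⁻¹)

/-- `S̃^{(h)}` at sites `i` and `j` (used with `j = i + 1`): the projection onto
kets with `g_i⁻¹ g_j = h`. -/
def Sop (i j : Fin n) (h : G) : Module.End ℂ (Hn G n) :=
  diagOp G n fun x => if (x i)⁻¹ * x j = h then 1 else 0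

/-- `U_g`: the diagonal left translation `|g₁,…,g_n⟩ ↦ |g g₁,…,g g_n⟩`. -/
def Uop (g : G) : Module.End ℂ (Hn G n) :=
  permOp G n fun x k => g⁻¹ * x k

/-- Generators `R^g_i` and `S̃^{(h)}_i` of the smooth boundary algebra. -/
def smoothGens : Set (Module.End ℂ (Hn G n)) :=
  {T | ∃ (i : Fin n) (g : G), T = Rop G n i g} ∪
  {T | ∃ (i j : Fin n) (h : G), (i : ℕ) + 1 = (j : ℕ) ∧ T = Sop G n i j h}

/-- The smooth boundary algebra `𝔇ⁿ_smooth`. -/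
def DSmooth : Subalgebra ℂ (Module.End ℂ (Hn G n)) :=
  Algebra.adjoin ℂ (smoothGens G n)

/-- `Z^k_{i,j}`: the projection onto kets with `g_i⁻¹ g_j = k`. -/
def Zop (i j : Fin n) (k : G) : Module.End ℂ (Hn G n) :=
  diagOp G n fun x => if (x i)⁻¹ * x j = k then 1 else 0

/-- The rough-boundary algebra of the SPT: generated by all two-site operators
`Z^k_{i,j}` (`i ≠ j`) together with right translations at interior sites only. -/
def SPTRough : Subalgebra ℂ (Module.End ℂ (Hn G n)) :=
  Algebra.adjoin ℂ
    ({T | ∃ (i j : Fin n) (k : G), i ≠ j ∧ T = Zop G n i j k} ∪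
     {T | ∃ (v : Fin n) (g : G), 0 < (v : ℕ) ∧ (v : ℕ) < n - 1 ∧ T = Rop G n v g})

set_option linter.unusedSectionVars false
namespace Stmt18Aux


variable {G : Type} [Group G] [Fintype G] [DecidableEq G] {m : ℕ}

def z0 (_hm : 2 ≤ m) : Fin m := ⟨0, by omega⟩
def lst (_hm : 2 ≤ m) : Fin m := ⟨m - 1, by omega⟩
def st (_hm : 2 ≤ m) (t : Fin (m - 2)) : Fin m := ⟨(t : ℕ) + 1, by have := t.isLt; omega⟩

lemma z0_ne_lst (hm : 2 ≤ m) : z0 hm ≠ lst hm := by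
  simp only [z0, lst, ne_eq, Fin.mk.injEq]; omega

lemma z0_ne_st (hm : 2 ≤ m) (t : Fin (m - 2)) : z0 hm ≠ st hm t := by
  simp only [z0, st, ne_eq, Fin.mk.injEq]; omega

def base (_hm : 2 ≤ m) (h : G) (a : Fin (m - 2) → G) : Fin m → G := fun j =>
  if hj0 : (j : ℕ) = 0 then 1
  else if hj1 : (j : ℕ) = m - 1 then h
  else a ⟨(j : ℕ) - 1, by have := j.isLt; omega⟩

lemma base_z0 (hm : 2 ≤ m) (h : G) (a : Fin (m - 2) → G) : base hm h a (z0 hm) = 1 := by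
  simp [base, z0]

lemma base_lst (hm : 2 ≤ m) (h : G) (a : Fin (m - 2) → G) : base hm h a (lst hm) = h := by
  have h1 : ¬ (m - 1 = 0) := by omega
  simp [base, lst, h1]

lemma base_st (hm : 2 ≤ m) (h : G) (a : Fin (m - 2) → G) (t : Fin (m - 2)) :
    base hm h a (st hm t) = a t := by
  have ht := t.isLt
  have h1 : ¬ ((t : ℕ) + 1 = 0) := by omega
  have h2 : ¬ ((t : ℕ) + 1 = m - 1) := by omega
  simp only [base, st, h1, h2, dif_neg, not_false_iff]
  exact (dif_neg h1).trans ((dif_neg h2).trans (congrArg a (Fin.ext (by simp))))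

def kk (hm : 2 ≤ m) (x : Fin m → G) : G := (x (z0 hm))⁻¹ * x (lst hm)

def dd (hm : 2 ≤ m) (x : Fin m → G) : Fin (m - 2) → G := fun t => (x (z0 hm))⁻¹ * x (st hm t)

def mk' (hm : 2 ≤ m) (g h : G) (a : Fin (m - 2) → G) : Fin m → G := fun j => g * base hm h a j

lemma base_self (hm : 2 ≤ m) (x : Fin m → G) (j : Fin m) :
    base hm (kk hm x) (dd hm x) j = (x (z0 hm))⁻¹ * x j := by
  unfold base
  split_ifs with h0 h1
  · have : j = z0 hm := Fin.ext h0
    rw [this]; simp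
  · have : j = lst hm := Fin.ext h1
    rw [this]; rfl
  · have hj : st hm ⟨(j : ℕ) - 1, by have := j.isLt; omega⟩ = j := Fin.ext (by simp [st]; omega)
    show dd hm x _ = _
    rw [dd, hj]

lemma mk'_self (hm : 2 ≤ m) (x : Fin m → G) :
    mk' hm (x (z0 hm)) (kk hm x) (dd hm x) = x := by
  funext j
  rw [mk', base_self]
  simp

lemma mk'_z0 (hm : 2 ≤ m) (g h : G) (a : Fin (m - 2) → G) : mk' hm g h a (z0 hm) = g := by
  simp [mk', base_z0]

lemma mk'_lst (hm : 2 ≤ m) (g h : G) (a : Fin (m - 2) → G) : mk' hm g h a (lst hm) = g * h := by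
  simp [mk', base_lst]

lemma mk'_st (hm : 2 ≤ m) (g h : G) (a : Fin (m - 2) → G) (t : Fin (m - 2)) :
    mk' hm g h a (st hm t) = g * a t := by
  simp [mk', base_st]

lemma kk_mk' (hm : 2 ≤ m) (g h : G) (a : Fin (m - 2) → G) : kk hm (mk' hm g h a) = h := by
  simp [kk, mk'_z0, mk'_lst]

lemma dd_mk' (hm : 2 ≤ m) (g h : G) (a : Fin (m - 2) → G) : dd hm (mk' hm g h a) = a := by
  funext t
  simp [dd, mk'_z0, mk'_st]

lemma mk'_inj (hm : 2 ≤ m) (g h : G) (a b : Fin (m - 2) → G) :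
    mk' hm g h a = mk' hm g h b ↔ a = b := by
  constructor
  · intro hab
    have := congrArg (dd hm) hab
    rwa [dd_mk', dd_mk'] at this
  · rintro rfl; rfl

lemma x0_dd (hm : 2 ≤ m) (x : Fin m → G) (t : Fin (m - 2)) :
    x (z0 hm) * dd hm x t = x (st hm t) := by
  simp [dd]

lemma base_update (hm : 2 ≤ m) (h : G) (a : Fin (m - 2) → G) (t : Fin (m - 2)) (c : G)
    (j : Fin m) :
    base hm h (Function.update a t c) j = if j = st hm t then c else base hm h a j := by
  by_cases hj : j = st hm t
  · subst hj
    simp [base_st]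
  · rw [if_neg hj]
    unfold base
    split_ifs with h0 h1
    · rfl
    · rfl
    · have hne : (⟨(j : ℕ) - 1, by have := j.isLt; omega⟩ : Fin (m - 2)) ≠ t := by
        intro hEq
        apply hj
        apply Fin.ext
        simp only [st]
        have := congrArg (Fin.val) hEq
        simp at this
        omega
      rw [Function.update_of_ne hne]

lemma mk'_update (hm : 2 ≤ m) (g h : G) (a : Fin (m - 2) → G) (t : Fin (m - 2)) (c : G) :
    mk' hm g h (Function.update a t c) = Function.update (mk' hm g h a) (st hm t) (g * c) := by
  funext j
  rw [mk', base_update]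
  by_cases hj : j = st hm t
  · subst hj; simp
  · rw [if_neg hj, Function.update_of_ne hj]; rfl


section Phi

variable {G : Type} [Group G] [Fintype G] [DecidableEq G] {m : ℕ}

/-- The underlying map of `Φ`. -/
def PhiFun (hm : 2 ≤ m) (M : G → Matrix (Fin (m - 2) → G) (Fin (m - 2) → G) ℂ) :
    Module.End ℂ (Hn G m) where
  toFun f := fun x =>
    ∑ y : Fin (m - 2) → G, M (kk hm x) (dd hm x) y * f (mk' hm (x (z0 hm)) (kk hm x) y)
  map_add' f g := by
    funext x
    simp only [Pi.add_apply, mul_add, Finset.sum_add_distrib]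
  map_smul' c f := by
    funext x
    simp only [Pi.smul_apply, smul_eq_mul, RingHom.id_apply, Finset.mul_sum]
    exact Finset.sum_congr rfl fun y _ => by ring

lemma PhiFun_apply (hm : 2 ≤ m) (M : G → Matrix (Fin (m - 2) → G) (Fin (m - 2) → G) ℂ)
    (f : Hn G m) (x : Fin m → G) :
    PhiFun hm M f x =
      ∑ y : Fin (m - 2) → G, M (kk hm x) (dd hm x) y * f (mk' hm (x (z0 hm)) (kk hm x) y) :=
  rfl

def PhiL (hm : 2 ≤ m) :
    (G → Matrix (Fin (m - 2) → G) (Fin (m - 2) → G) ℂ) →ₗ[ℂ] Module.End ℂ (Hn G m) where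
  toFun := PhiFun hm
  map_add' M N := by
    apply LinearMap.ext; intro f; funext x
    simp only [PhiFun_apply, LinearMap.add_apply, Pi.add_apply, Matrix.add_apply, add_mul,
      Finset.sum_add_distrib]
  map_smul' c M := by
    apply LinearMap.ext; intro f; funext x
    simp only [PhiFun_apply, RingHom.id_apply, LinearMap.smul_apply, Pi.smul_apply,
      Matrix.smul_apply, smul_eq_mul, Finset.mul_sum]
    exact Finset.sum_congr rfl fun y _ => by ring

lemma PhiFun_one (hm : 2 ≤ m) : PhiFun (G := G) hm 1 = 1 := by
  apply LinearMap.ext; intro f; funext x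
  simp only [PhiFun_apply, Pi.one_apply, Matrix.one_apply, ite_mul, one_mul, zero_mul,
    Finset.sum_ite_eq, Finset.mem_univ, if_true, mk'_self]
  rfl

lemma PhiFun_mul (hm : 2 ≤ m) (M N : G → Matrix (Fin (m - 2) → G) (Fin (m - 2) → G) ℂ) :
    PhiFun hm (M * N) = PhiFun hm M * PhiFun hm N := by
  apply LinearMap.ext; intro f; funext x
  show ∑ y, (M (kk hm x) * N (kk hm x)) (dd hm x) y * f (mk' hm (x (z0 hm)) (kk hm x) y)
      = PhiFun hm M (PhiFun hm N f) x
  simp only [PhiFun_apply, kk_mk', dd_mk', mk'_z0, Matrix.mul_apply, Finset.sum_mul,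
    Finset.mul_sum]
  rw [Finset.sum_comm]
  exact Finset.sum_congr rfl fun z _ => Finset.sum_congr rfl fun y _ => by ring

/-- The algebra homomorphism `Φ`. -/
def Phi (hm : 2 ≤ m) :
    (G → Matrix (Fin (m - 2) → G) (Fin (m - 2) → G) ℂ) →ₐ[ℂ] Module.End ℂ (Hn G m) :=
  AlgHom.ofLinearMap (PhiL hm) (PhiFun_one hm) (PhiFun_mul hm)

lemma Phi_apply (hm : 2 ≤ m) (M : G → Matrix (Fin (m - 2) → G) (Fin (m - 2) → G) ℂ)
    (f : Hn G m) (x : Fin m → G) :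
    Phi hm M f x =
      ∑ y : Fin (m - 2) → G, M (kk hm x) (dd hm x) y * f (mk' hm (x (z0 hm)) (kk hm x) y) :=
  rfl

lemma Phi_inj (hm : 2 ≤ m) : Function.Injective (Phi (G := G) hm) := by
  rw [injective_iff_map_eq_zero]
  intro M hM
  funext g
  apply Matrix.ext
  intro a b
  have h2 : Phi hm M (fun w => if w = mk' hm 1 g b then (1 : ℂ) else 0) (mk' hm 1 g a) = 0 := by
    rw [hM]; rfl
  simp only [Phi_apply, kk_mk', dd_mk', mk'_z0, mk'_inj, mul_ite, mul_one, mul_zero,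
    Finset.sum_ite_eq', Finset.mem_univ, if_true, LinearMap.zero_apply, Pi.zero_apply] at h2
  simpa using h2

end Phi

section Gens

variable {G : Type} [Group G] [Fintype G] [DecidableEq G] {m : ℕ}

/-- Matrix realizing `Zop i j k`. -/
def MZ (hm : 2 ≤ m) (i j : Fin m) (k : G) :
    G → Matrix (Fin (m - 2) → G) (Fin (m - 2) → G) ℂ := fun h =>
  Matrix.diagonal fun a => if (base hm h a i)⁻¹ * base hm h a j = k then 1 else 0

/-- Matrix realizing `Rop (st t) g`. -/
def MR (hm : 2 ≤ m) (t : Fin (m - 2)) (g : G) :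
    G → Matrix (Fin (m - 2) → G) (Fin (m - 2) → G) ℂ := fun _ =>
  Matrix.of fun a b => if b = Function.update a t (a t * g⁻¹) then 1 else 0

lemma Phi_MZ (hm : 2 ≤ m) (i j : Fin m) (k : G) :
    Phi hm (MZ hm i j k) = Zop G m i j k := by
  apply LinearMap.ext; intro f; funext x
  show _ = (if (x i)⁻¹ * x j = k then 1 else 0) * f x
  simp only [Phi_apply, MZ, Matrix.diagonal_apply, ite_mul, zero_mul, Finset.sum_ite_eq,
    Finset.mem_univ, if_true, mk'_self, base_self]
  have hc : ((x (z0 hm))⁻¹ * x i)⁻¹ * ((x (z0 hm))⁻¹ * x j) = (x i)⁻¹ * x j := by group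
  rw [hc]

lemma Phi_MR (hm : 2 ≤ m) (t : Fin (m - 2)) (g : G) :
    Phi hm (MR hm t g) = Rop G m (st hm t) g := by
  apply LinearMap.ext; intro f; funext x
  show _ = f (Function.update x (st hm t) (x (st hm t) * g⁻¹))
  simp only [Phi_apply, MR, Matrix.of_apply, ite_mul, one_mul, zero_mul, Finset.sum_ite_eq',
    Finset.mem_univ, if_true]
  rw [mk'_update, mk'_self, ← mul_assoc, x0_dd]

lemma MZ_mem (hm : 2 ≤ m) {i j : Fin m} (hij : i ≠ j) (k : G) :
    Phi hm (MZ hm i j k) ∈ SPTRough G m :=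
  Algebra.subset_adjoin (Or.inl ⟨i, j, k, hij, Phi_MZ hm i j k⟩)

lemma MR_mem (hm : 2 ≤ m) (t : Fin (m - 2)) (g : G) :
    Phi hm (MR hm t g) ∈ SPTRough G m := by
  refine Algebra.subset_adjoin (Or.inr ⟨st hm t, g, ?_, ?_, Phi_MR hm t g⟩)
  · simp [st]
  · have := t.isLt; simp only [st]; omega

lemma MZ_z0_st (hm : 2 ≤ m) (u : Fin (m - 2)) (c : G) (h : G) :
    MZ hm (z0 hm) (st hm u) c h =
      Matrix.diagonal fun x : Fin (m - 2) → G => if x u = c then (1 : ℂ) else 0 := by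
  simp [MZ, base_z0, base_st]

lemma MZ_z0_lst (hm : 2 ≤ m) (g : G) (h : G) :
    MZ hm (z0 hm) (lst hm) g h =
      if h = g then (1 : Matrix (Fin (m - 2) → G) (Fin (m - 2) → G) ℂ) else 0 := by
  by_cases hg : h = g
  · simp [MZ, base_z0, base_lst, hg, Matrix.diagonal_one]
  · simp [MZ, base_z0, base_lst, hg]

lemma diag_mem (hm : 2 ≤ m) (a : Fin (m - 2) → G) (s : Finset (Fin (m - 2))) :
    Phi hm (fun _ : G =>
        Matrix.diagonal fun x : Fin (m - 2) → G => ∏ t ∈ s, (if x t = a t then (1 : ℂ) else 0))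
      ∈ SPTRough G m := by
  classical
  induction s using Finset.induction_on with
  | empty =>
    have h1 : (fun _ : G =>
        Matrix.diagonal fun x : Fin (m - 2) → G => ∏ t ∈ (∅ : Finset (Fin (m - 2))),
          (if x t = a t then (1 : ℂ) else 0)) = 1 := by
      funext h
      simp [Matrix.diagonal_one]
    rw [h1, map_one]
    exact one_mem _
  | @insert u s hu ih =>
    have h1 : (fun _ : G =>
        Matrix.diagonal fun x : Fin (m - 2) → G => ∏ t ∈ insert u s,
          (if x t = a t then (1 : ℂ) else 0)) =
        MZ hm (z0 hm) (st hm u) (a u) * (fun _ : G =>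
          Matrix.diagonal fun x : Fin (m - 2) → G => ∏ t ∈ s, (if x t = a t then (1 : ℂ) else 0)) := by
      funext h
      show _ = MZ hm (z0 hm) (st hm u) (a u) h * _
      rw [MZ_z0_st, Matrix.diagonal_mul_diagonal]
      have hfun : (fun x : Fin (m - 2) → G => ∏ t ∈ insert u s, (if x t = a t then (1 : ℂ) else 0))
          = fun x => (if x u = a u then (1 : ℂ) else 0) * ∏ t ∈ s, (if x t = a t then (1 : ℂ) else 0) :=
        funext fun x => Finset.prod_insert hu
      rw [hfun]
    rw [h1, map_mul]
    exact mul_mem (MZ_mem hm (z0_ne_st hm u) (a u)) ih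

lemma diag_point_mem (hm : 2 ≤ m) (a : Fin (m - 2) → G) :
    Phi hm (fun _ : G =>
        Matrix.diagonal fun x : Fin (m - 2) → G => if x = a then (1 : ℂ) else 0)
      ∈ SPTRough G m := by
  have h1 : (fun x : Fin (m - 2) → G => if x = a then (1 : ℂ) else 0) =
      fun x => ∏ t, (if x t = a t then (1 : ℂ) else 0) := by
    funext x
    by_cases hx : x = a
    · subst hx; simp
    · rw [if_neg hx]
      obtain ⟨t, ht⟩ := Function.ne_iff.mp hx
      exact (Finset.prod_eq_zero (Finset.mem_univ t) (by simp [ht])).symm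
  rw [h1]
  exact diag_mem hm a Finset.univ

/-- Permutation matrix for `σ` (acting by `|x⟩ ↦ ∑_y [y = σ x] |y⟩` convention). -/
def Pm (σ : (Fin (m - 2) → G) → (Fin (m - 2) → G)) :
    Matrix (Fin (m - 2) → G) (Fin (m - 2) → G) ℂ :=
  Matrix.of fun x y => if y = σ x then 1 else 0

lemma Pm_mul (σ τ : (Fin (m - 2) → G) → (Fin (m - 2) → G)) :
    Pm (G := G) σ * Pm τ = Pm (fun x => τ (σ x)) := by
  apply Matrix.ext; intro x y
  simp only [Pm, Matrix.mul_apply, Matrix.of_apply, ite_mul, one_mul, zero_mul]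
  rw [Finset.sum_ite_eq' Finset.univ (σ x) (fun z => if y = τ z then (1 : ℂ) else 0)]
  simp

lemma Pm_id : Pm (G := G) (m := m) (fun x => x) = 1 := by
  apply Matrix.ext; intro x y
  simp [Pm, Matrix.one_apply, eq_comm]

def rmul (s : Finset (Fin (m - 2))) (c : Fin (m - 2) → G) :
    (Fin (m - 2) → G) → (Fin (m - 2) → G) := fun x j => if j ∈ s then x j * c j else x j

lemma perm_mem (hm : 2 ≤ m) (c : Fin (m - 2) → G) (s : Finset (Fin (m - 2))) :
    Phi hm (fun _ : G => Pm (rmul s c)) ∈ SPTRough G m := by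
  classical
  induction s using Finset.induction_on with
  | empty =>
    have h0 : rmul (∅ : Finset (Fin (m - 2))) c = fun x => x := by
      funext x j; simp [rmul]
    have h1 : (fun _ : G => Pm (rmul (∅ : Finset (Fin (m - 2))) c)) = 1 := by
      rw [h0, Pm_id]; rfl
    rw [h1, map_one]
    exact one_mem _
  | @insert u s hu ih =>
    have hcomp : rmul (insert u s) c =
        fun x => rmul s c (Function.update x u (x u * c u)) := by
      funext x j
      simp only [rmul, Finset.mem_insert]
      by_cases hju : j = u
      · subst hju
        have hjs : j ∉ s := hu
        simp [hjs]
      · by_cases hjs : j ∈ s <;> simp [hju, hjs, Function.update_of_ne hju]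
    have h1 : (fun _ : G => Pm (rmul (insert u s) c)) =
        MR hm u ((c u)⁻¹) * (fun _ : G => Pm (rmul s c)) := by
      funext h
      show _ = MR hm u ((c u)⁻¹) h * _
      have hMR : MR hm u ((c u)⁻¹) h = Pm (fun x => Function.update x u (x u * c u)) := by
        simp [MR, Pm]
      rw [hMR, Pm_mul, hcomp]
    rw [h1, map_mul]
    exact mul_mem (MR_mem hm u ((c u)⁻¹)) ih

lemma diag_mul_Pm (a : Fin (m - 2) → G) (σ : (Fin (m - 2) → G) → (Fin (m - 2) → G)) :
    Matrix.diagonal (fun x : Fin (m - 2) → G => if x = a then (1 : ℂ) else 0) * Pm σ =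
      Matrix.single a (σ a) 1 := by
  apply Matrix.ext; intro x y
  rw [Matrix.diagonal_mul]
  simp only [Pm, Matrix.of_apply, Matrix.single, ite_mul, one_mul, zero_mul]
  by_cases hx : x = a
  · subst hx
    by_cases hy : y = σ x <;> simp [hy, eq_comm]
  · have hax : ¬(a = x ∧ σ a = y) := fun hc => hx hc.1.symm
    simp [hx, hax]

lemma Bmat_mem (hm : 2 ≤ m) (g : G) (a b : Fin (m - 2) → G) :
    Phi hm (fun h : G => if h = g then Matrix.single a b (1 : ℂ) else 0)
      ∈ SPTRough G m := by
  set σ : (Fin (m - 2) → G) → (Fin (m - 2) → G) := rmul Finset.univ (fun j => (a j)⁻¹ * b j)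
    with hσ
  have hσa : σ a = b := by
    funext j; simp [hσ, rmul]
  have hfac : (fun h : G => if h = g then Matrix.single a b (1 : ℂ) else 0) =
      MZ hm (z0 hm) (lst hm) g *
        ((fun _ : G => Matrix.diagonal fun x : Fin (m - 2) → G => if x = a then (1 : ℂ) else 0) *
         (fun _ : G => Pm σ)) := by
    funext h
    show _ = MZ hm (z0 hm) (lst hm) g h * _
    rw [MZ_z0_lst]
    show _ = _ * (Matrix.diagonal _ * Pm σ)
    rw [diag_mul_Pm, hσa]
    by_cases hg : h = g <;> simp [hg]
  rw [hfac, map_mul, map_mul]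
  exact mul_mem (MZ_mem hm (z0_ne_lst hm) g)
    (mul_mem (diag_point_mem hm a) (perm_mem hm _ Finset.univ))

lemma Phi_mem (hm : 2 ≤ m) (M : G → Matrix (Fin (m - 2) → G) (Fin (m - 2) → G) ℂ) :
    Phi hm M ∈ SPTRough G m := by
  have hdecomp : M = ∑ g : G, ∑ a : Fin (m - 2) → G, ∑ b : Fin (m - 2) → G,
      M g a b • (fun h : G => if h = g then Matrix.single a b (1 : ℂ) else 0) := by
    funext h
    have step1 : (∑ g : G, ∑ a : Fin (m - 2) → G, ∑ b : Fin (m - 2) → G,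
        M g a b • (fun h' : G => if h' = g then Matrix.single a b (1 : ℂ) else 0)) h =
        ∑ g : G, if h = g then
          ∑ a : Fin (m - 2) → G, ∑ b : Fin (m - 2) → G,
            Matrix.single a b (M g a b) else 0 := by
      simp only [Finset.sum_apply, Pi.smul_apply]
      refine Finset.sum_congr rfl fun g _ => ?_
      by_cases hg : h = g
      · rw [if_pos hg]
        refine Finset.sum_congr rfl fun a _ => Finset.sum_congr rfl fun b _ => ?_
        rw [if_pos hg, Matrix.smul_single, smul_eq_mul, mul_one]
      · rw [if_neg hg]
        simp [hg]
    rw [step1, Finset.sum_ite_eq Finset.univ h]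
    simp only [Finset.mem_univ, if_true]
    apply Matrix.ext; intro x y
    rw [Matrix.sum_apply]
    simp only [Matrix.sum_apply, Matrix.single, Matrix.of_apply]
    rw [Finset.sum_comm]
    simp [Finset.sum_ite_eq, Finset.sum_ite_eq', ite_and]
  have hPhi : Phi hm M = ∑ g : G, ∑ a : Fin (m - 2) → G, ∑ b : Fin (m - 2) → G,
      M g a b • Phi hm (fun h : G => if h = g then Matrix.single a b (1 : ℂ) else 0) := by
    conv_lhs => rw [hdecomp]
    rw [map_sum]
    refine Finset.sum_congr rfl fun g _ => ?_
    rw [map_sum]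
    refine Finset.sum_congr rfl fun a _ => ?_
    rw [map_sum]
    refine Finset.sum_congr rfl fun b _ => ?_
    rw [map_smul]
  rw [hPhi]
  refine sum_mem fun g _ => sum_mem fun a _ => sum_mem fun b _ => ?_
  exact Subalgebra.smul_mem _ (Bmat_mem hm g a b) _

lemma range_Phi (hm : 2 ≤ m) : (Phi (G := G) hm).range = SPTRough G m := by
  apply le_antisymm
  · rintro T ⟨M, rfl⟩
    exact Phi_mem hm M
  · rw [SPTRough]
    apply Algebra.adjoin_le
    rintro T (⟨i, j, k, hij, rfl⟩ | ⟨v, g, hv0, hv1, rfl⟩)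
    · exact (AlgHom.mem_range _).mpr ⟨MZ hm i j k, Phi_MZ hm i j k⟩
    · have hvlt : (v : ℕ) - 1 < m - 2 := by omega
      have hv : st hm ⟨(v : ℕ) - 1, hvlt⟩ = v := Fin.ext (by simp only [st]; omega)
      exact (AlgHom.mem_range _).mpr ⟨MR hm ⟨(v : ℕ) - 1, hvlt⟩ g, by rw [Phi_MR, hv]⟩

end Gens
end Stmt18Aux

/-- for `m ≥ 2`, the SPT rough-boundary algebra is isomorphic as a
ℂ-algebra to the direct sum of `|G|` copies of `M_{|G|^(m-2)}(ℂ)`. -/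
theorem stmt18 (m : ℕ) (hm : 2 ≤ m) :
    Nonempty (↥(SPTRough G m) ≃ₐ[ℂ]
      (G → Matrix (Fin (Fintype.card G ^ (m - 2))) (Fin (Fintype.card G ^ (m - 2))) ℂ)) := by
  classical
  refine ⟨?_⟩
  have e0 : ↥(SPTRough G m) ≃ₐ[ℂ] ↥(Stmt18Aux.Phi (G := G) hm).range :=
    Subalgebra.equivOfEq _ _ (Stmt18Aux.range_Phi hm).symm
  have e1 : ↥(Stmt18Aux.Phi (G := G) hm).range ≃ₐ[ℂ]
      (G → Matrix (Fin (m - 2) → G) (Fin (m - 2) → G) ℂ) :=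
    (AlgEquiv.ofInjective (Stmt18Aux.Phi (G := G) hm) (Stmt18Aux.Phi_inj hm)).symm
  have eI : (Fin (m - 2) → G) ≃ Fin (Fintype.card G ^ (m - 2)) :=
    Fintype.equivFinOfCardEq (by simp [Fintype.card_fun])
  have e2 : (G → Matrix (Fin (m - 2) → G) (Fin (m - 2) → G) ℂ) ≃ₐ[ℂ]
      (G → Matrix (Fin (Fintype.card G ^ (m - 2))) (Fin (Fintype.card G ^ (m - 2))) ℂ) :=
    AlgEquiv.piCongrRight fun _ => Matrix.reindexAlgEquiv ℂ ℂ eI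
  exact (e0.trans e1).trans e2
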